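/- Let n ≥ 2 and let A be an n×n row-stochastic strictly diagonally dominant positive real matrix. If c_i(A^{-T}) ≥ (n−1)·2^{K_max − K_min} for every i, then the channel capacity equals the closed-form expression: C(A) = U(A). -/

import Mathlib

open Matrix Finset Real

noncomputable def rowEntropy {n : ℕ} (A : Matrix (Fin n) (Fin n) ℝ) (i : Fin n) : ℝ :=
  -∑ k, A i k * Real.logb 2 (A i k)

noncomputable def Kvec {n : ℕ} (A : Matrix (Fin n) (Fin n) ℝ) (j : Fin n) : ℝ :=
  ∑ i, A⁻¹ j i * rowEntropy A i

noncomputable def Kmax {n : ℕ} (A : Matrix (Fin n) (Fin n) ℝ) : ℝ := ⨆ j, Kvec A j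

noncomputable def Kmin {n : ℕ} (A : Matrix (Fin n) (Fin n) ℝ) : ℝ := ⨅ j, Kvec A j

def IsPmf {n : ℕ} (p : Fin n → ℝ) : Prop := (∀ i, 0 ≤ p i) ∧ ∑ i, p i = 1

noncomputable def mutualInfo {n : ℕ} (A : Matrix (Fin n) (Fin n) ℝ) (p : Fin n → ℝ) : ℝ :=
  -(∑ j, Aᵀ.mulVec p j * Real.logb 2 (Aᵀ.mulVec p j))
    + ∑ i, ∑ j, p i * A i j * Real.logb 2 (A i j)

noncomputable def capacity {n : ℕ} (A : Matrix (Fin n) (Fin n) ℝ) : ℝ :=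
  sSup {x : ℝ | ∃ p : Fin n → ℝ, IsPmf p ∧ mutualInfo A p = x}

noncomputable def qStar {n : ℕ} (A : Matrix (Fin n) (Fin n) ℝ) (j : Fin n) : ℝ :=
  (2 : ℝ) ^ (-Kvec A j) / ∑ i, (2 : ℝ) ^ (-Kvec A i)

noncomputable def pStar {n : ℕ} (A : Matrix (Fin n) (Fin n) ℝ) : Fin n → ℝ :=
  (A⁻¹)ᵀ.mulVec (qStar A)

noncomputable def Ubound {n : ℕ} (A : Matrix (Fin n) (Fin n) ℝ) : ℝ :=
  -(∑ j, qStar A j * Real.logb 2 (qStar A j))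
    + ∑ i, ∑ j, pStar A i * A i j * Real.logb 2 (A i j)

noncomputable def cmin {n : ℕ} (A : Matrix (Fin n) (Fin n) ℝ) : ℝ :=
  ⨅ i, A i i / ∑ j ∈ Finset.univ.erase i, |A i j|

noncomputable def Hmax {n : ℕ} (A : Matrix (Fin n) (Fin n) ℝ) : ℝ := ⨆ i, rowEntropy A i

noncomputable def sigmaMin {n : ℕ} (A : Matrix (Fin n) (Fin n) ℝ) : ℝ :=
  Real.sqrt (⨅ i, (Matrix.isHermitian_conjTranspose_mul_self A).eigenvalues i)

def RowStochastic {n : ℕ} (A : Matrix (Fin n) (Fin n) ℝ) : Prop :=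
  (∀ i j, 0 ≤ A i j) ∧ ∀ i, ∑ j, A i j = 1

def SDDPos {n : ℕ} (A : Matrix (Fin n) (Fin n) ℝ) : Prop :=
  (∀ i j, 0 < A i j) ∧ ∀ i, ∑ j ∈ Finset.univ.erase i, A i j < A i i


/-!
Since `A` is invertible, `∑ᵢ pᵢ H(Aᵢ) = ∑ⱼ (Aᵀp)ⱼ Kⱼ`, so the mutual information is a function of
the output distribution `r = Aᵀp` alone: `I = H(r) - ∑ⱼ rⱼ Kⱼ`. By Gibbs' inequality against `q*`,
this is at most `log₂ ∑ⱼ 2^{-Kⱼ}`, with equality at `r = q*`. The only question is whether `q*` is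
an output distribution, i.e. whether `p* = A⁻ᵀ q*` is nonnegative (it sums to `1` because `A⁻¹`
has unit row sums). Since the entries of `q*` differ by a factor at most `2^{Kmax - Kmin}`, the
Gershgorin-type condition on the columns of `A⁻¹` makes the diagonal term of `p*ᵢ` dominate.
-/

lemma Real.mul_log_sub_log_le {r q : ℝ} (hr : 0 ≤ r) (hq : 0 < q) :
    r * (log q - log r) ≤ q - r := by
  rcases hr.eq_or_lt with rfl | hr
  · simpa using hq.le
  · calc r * (log q - log r) = r * log (q / r) := by rw [log_div hq.ne' hr.ne']
      _ ≤ r * (q / r - 1) := by gcongr; exact log_le_sub_one_of_pos (div_pos hq hr)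
      _ = q - r := by field_simp

/-- Gibbs' inequality. -/
theorem Real.sum_mul_logb_le_sum_mul_logb_self {ι : Type*} [Fintype ι] {r q : ι → ℝ}
    (hr : ∀ j, 0 ≤ r j) (hq : ∀ j, 0 < q j) (hsum : ∑ j, q j ≤ ∑ j, r j) :
    ∑ j, r j * logb 2 (q j) ≤ ∑ j, r j * logb 2 (r j) := by
  have hlog2 : 0 < log 2 := log_pos one_lt_two
  have key : ∑ j, r j * (log (q j) - log (r j)) ≤ 0 :=
    calc ∑ j, r j * (log (q j) - log (r j)) ≤ ∑ j, (q j - r j) :=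
          sum_le_sum fun j _ => mul_log_sub_log_le (hr j) (hq j)
      _ ≤ 0 := by rw [sum_sub_distrib]; linarith
  have := div_nonpos_of_nonpos_of_nonneg key hlog2.le
  simp only [logb, mul_sub, sum_sub_distrib, sub_div, mul_div_assoc', ← sum_div] at this ⊢
  linarith

lemma Matrix.sum_vecMul_of_mulVec_one {ι : Type*} [Fintype ι] {M : Matrix ι ι ℝ}
    (hM : M *ᵥ 1 = 1) (v : ι → ℝ) : ∑ j, (v ᵥ* M) j = ∑ j, v j := by
  rw [← dotProduct_one, ← dotProduct_mulVec, hM, dotProduct_one]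

lemma Matrix.inv_mulVec_one_of_mulVec_one {ι : Type*} [Fintype ι] [DecidableEq ι]
    {M : Matrix ι ι ℝ} (hdet : IsUnit M.det) (hM : M *ᵥ 1 = 1) : M⁻¹ *ᵥ 1 = 1 := by
  rw [← hM, mulVec_mulVec, nonsing_inv_mul M hdet, one_mulVec, hM]

lemma Matrix.transpose_mulVec_nonneg_of_le_mul {ι : Type*} [Fintype ι] [DecidableEq ι]
    (B : Matrix ι ι ℝ) {q : ι → ℝ} {c : ℝ} {i : ι} (hq : ∀ j, 0 ≤ q j)
    (hratio : ∀ j, q j ≤ c * q i) (hdiag : c * ∑ j ∈ univ.erase i, |B j i| ≤ B i i) :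
    0 ≤ (Bᵀ *ᵥ q) i := by
  have hoff : -(c * q i * ∑ j ∈ univ.erase i, |B j i|) ≤ ∑ j ∈ univ.erase i, B j i * q j := by
    rw [mul_sum, ← sum_neg_distrib]
    refine sum_le_sum fun j _ => ?_
    have h1 := mul_le_mul_of_nonneg_right (neg_abs_le (B j i)) (hq j)
    have h2 := mul_le_mul_of_nonneg_left (hratio j) (abs_nonneg (B j i))
    linarith
  have hsplit : (Bᵀ *ᵥ q) i = B i i * q i + ∑ j ∈ univ.erase i, B j i * q j := by
    rw [mulVec_transpose, vecMul, dotProduct, ← add_sum_erase _ _ (mem_univ i)]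
    simp only [mul_comm (q _)]
  linarith [mul_le_mul_of_nonneg_right hdiag (hq i)]

section Channel

variable {n : ℕ} {A : Matrix (Fin n) (Fin n) ℝ}

lemma SDDPos.isUnit_det (hA : SDDPos A) : IsUnit A.det := by
  refine isUnit_iff_ne_zero.mpr (det_ne_zero_of_sum_row_lt_diag fun k => ?_)
  simp only [norm_of_nonneg (hA.1 k _).le]
  exact hA.2 k

lemma RowStochastic.mulVec_one (hA : RowStochastic A) : A *ᵥ 1 = 1 := by
  ext i
  simp [mulVec, dotProduct, hA.2 i]

lemma RowStochastic.isPmf_transpose_mulVec (hA : RowStochastic A) {p : Fin n → ℝ}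
    (hp : IsPmf p) : IsPmf (Aᵀ *ᵥ p) := by
  refine ⟨fun j => ?_, ?_⟩
  · simp only [mulVec, dotProduct, transpose_apply]
    exact sum_nonneg fun i _ => mul_nonneg (hA.1 i j) (hp.1 i)
  · rw [mulVec_transpose, sum_vecMul_of_mulVec_one hA.mulVec_one, hp.2]

variable (A)

lemma transpose_mulVec_dotProduct_Kvec (hdet : IsUnit A.det) (p : Fin n → ℝ) :
    (Aᵀ *ᵥ p) ⬝ᵥ Kvec A = p ⬝ᵥ rowEntropy A := by
  change (Aᵀ *ᵥ p) ⬝ᵥ (A⁻¹ *ᵥ rowEntropy A) = _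
  rw [dotProduct_mulVec, mulVec_transpose, vecMul_vecMul, mul_nonsing_inv A hdet, vecMul_one]

lemma mutualInfo_eq (hdet : IsUnit A.det) (p : Fin n → ℝ) :
    mutualInfo A p = -∑ j, (Aᵀ *ᵥ p) j * logb 2 ((Aᵀ *ᵥ p) j) - (Aᵀ *ᵥ p) ⬝ᵥ Kvec A := by
  have hrow : ∀ i, ∑ j, p i * A i j * logb 2 (A i j) = -(p i * rowEntropy A i) := fun i => by
    simp [rowEntropy, mul_sum, mul_assoc]
  rw [transpose_mulVec_dotProduct_Kvec A hdet, mutualInfo, sum_congr rfl fun i _ => hrow i,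
    sum_neg_distrib, dotProduct, sub_eq_add_neg]

noncomputable def kPartition : ℝ := ∑ j, (2 : ℝ) ^ (-Kvec A j)

lemma qStar_eq (j : Fin n) : qStar A j = (2 : ℝ) ^ (-Kvec A j) / kPartition A := rfl

variable [NeZero n]

lemma kPartition_pos : 0 < kPartition A :=
  sum_pos (fun _ _ => rpow_pos_of_pos two_pos _) univ_nonempty

lemma qStar_pos (j : Fin n) : 0 < qStar A j :=
  div_pos (rpow_pos_of_pos two_pos _) (kPartition_pos A)

lemma sum_qStar : ∑ j, qStar A j = 1 := by
  simp only [qStar_eq, ← sum_div]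
  exact div_self (kPartition_pos A).ne'

lemma logb_qStar (j : Fin n) : logb 2 (qStar A j) = -Kvec A j - logb 2 (kPartition A) := by
  rw [qStar_eq, logb_div (rpow_pos_of_pos two_pos _).ne' (kPartition_pos A).ne',
    logb_rpow two_pos (by norm_num)]

lemma sum_mul_logb_qStar (r : Fin n → ℝ) :
    ∑ j, r j * logb 2 (qStar A j) = -(r ⬝ᵥ Kvec A) - (∑ j, r j) * logb 2 (kPartition A) := by
  simp only [logb_qStar, mul_sub, mul_neg, sum_sub_distrib, sum_neg_distrib, sum_mul, dotProduct]

lemma entropy_sub_dotProduct_Kvec_le {r : Fin n → ℝ} (hr : IsPmf r) :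
    -∑ j, r j * logb 2 (r j) - r ⬝ᵥ Kvec A ≤ logb 2 (kPartition A) := by
  have hgibbs := sum_mul_logb_le_sum_mul_logb_self hr.1 (qStar_pos A) (by rw [sum_qStar, hr.2])
  rw [sum_mul_logb_qStar, hr.2] at hgibbs
  linarith

lemma entropy_qStar_sub_dotProduct_Kvec :
    -∑ j, qStar A j * logb 2 (qStar A j) - qStar A ⬝ᵥ Kvec A = logb 2 (kPartition A) := by
  rw [sum_mul_logb_qStar, sum_qStar]
  ring

lemma mutualInfo_le (hst : RowStochastic A) (hdet : IsUnit A.det) {p : Fin n → ℝ}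
    (hp : IsPmf p) :
    mutualInfo A p ≤ logb 2 (kPartition A) := by
  rw [mutualInfo_eq A hdet]
  exact entropy_sub_dotProduct_Kvec_le A (hst.isPmf_transpose_mulVec hp)

omit [NeZero n] in
lemma transpose_mulVec_pStar (hdet : IsUnit A.det) : Aᵀ *ᵥ pStar A = qStar A := by
  rw [pStar, mulVec_mulVec, ← transpose_mul, nonsing_inv_mul A hdet, transpose_one, one_mulVec]

omit [NeZero n] in
lemma mutualInfo_pStar (hdet : IsUnit A.det) : mutualInfo A (pStar A) = Ubound A := by
  rw [mutualInfo, Ubound, transpose_mulVec_pStar A hdet]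

lemma Ubound_eq (hdet : IsUnit A.det) : Ubound A = logb 2 (kPartition A) := by
  rw [← mutualInfo_pStar A hdet, mutualInfo_eq A hdet, transpose_mulVec_pStar A hdet,
    entropy_qStar_sub_dotProduct_Kvec]

lemma sum_pStar (hst : RowStochastic A) (hdet : IsUnit A.det) : ∑ i, pStar A i = 1 := by
  have hinv := inv_mulVec_one_of_mulVec_one hdet hst.mulVec_one
  rw [pStar, mulVec_transpose, sum_vecMul_of_mulVec_one hinv, sum_qStar]

lemma qStar_le_mul_qStar (i j : Fin n) :
    qStar A j ≤ (2 : ℝ) ^ (Kmax A - Kmin A) * qStar A i := by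
  have hmax : Kvec A i ≤ Kmax A := le_ciSup (Set.finite_range (Kvec A)).bddAbove i
  have hmin : Kmin A ≤ Kvec A j := ciInf_le (Set.finite_range (Kvec A)).bddBelow j
  have hK : -Kvec A j ≤ Kmax A - Kmin A + -Kvec A i := by linarith
  have hpow := rpow_le_rpow_of_exponent_le one_le_two hK
  rw [rpow_add two_pos] at hpow
  rw [qStar_eq, qStar_eq, mul_div_assoc']
  exact div_le_div_of_nonneg_right hpow (kPartition_pos A).le

lemma pStar_nonneg (hn : 2 ≤ n) {i : Fin n}
    (hc : ((n : ℝ) - 1) * (2 : ℝ) ^ (Kmax A - Kmin A) ≤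
      A⁻¹ i i / ∑ j ∈ univ.erase i, |A⁻¹ j i|) :
    0 ≤ pStar A i := by
  set D := ∑ j ∈ univ.erase i, |A⁻¹ j i|
  have hn1 : (1 : ℝ) ≤ n - 1 := by
    have : (2 : ℝ) ≤ n := by exact_mod_cast hn
    linarith
  have hpow : 0 < (2 : ℝ) ^ (Kmax A - Kmin A) := rpow_pos_of_pos two_pos _
  have hD : 0 < D := by
    by_contra hD
    have hD0 : D = 0 := le_antisymm (not_lt.mp hD) (sum_nonneg fun j _ => abs_nonneg _)
    rw [hD0, div_zero] at hc
    linarith [mul_pos (by linarith : (0 : ℝ) < n - 1) hpow]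
  have hdiag : (2 : ℝ) ^ (Kmax A - Kmin A) * D ≤ A⁻¹ i i := by
    rw [le_div_iff₀ hD] at hc
    linarith [mul_le_mul_of_nonneg_right hn1 (mul_pos hpow hD).le]
  exact transpose_mulVec_nonneg_of_le_mul A⁻¹ (fun j => (qStar_pos A j).le)
    (qStar_le_mul_qStar A i) hdiag

end Channel

theorem capacity_eq_Ubound_of_gershgorin_cond {n : ℕ} (hn : 2 ≤ n)
    (A : Matrix (Fin n) (Fin n) ℝ) (hst : RowStochastic A) (hA : SDDPos A)
    (hc : ∀ i, ((n : ℝ) - 1) * (2 : ℝ) ^ (Kmax A - Kmin A) ≤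
        A⁻¹ i i / ∑ j ∈ Finset.univ.erase i, |A⁻¹ j i|) :
    capacity A = Ubound A := by
  have : NeZero n := ⟨by omega⟩
  have hdet := hA.isUnit_det
  have hpStar : IsPmf (pStar A) := ⟨fun i => pStar_nonneg A hn (hc i), sum_pStar A hst hdet⟩
  have hgreatest : IsGreatest {x | ∃ p, IsPmf p ∧ mutualInfo A p = x} (Ubound A) := by
    refine ⟨⟨pStar A, hpStar, mutualInfo_pStar A hdet⟩, ?_⟩
    rintro _ ⟨p, hp, rfl⟩
    rw [Ubound_eq A hdet]
    exact mutualInfo_le A hst hdet hp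
  exact hgreatest.csSup_eq
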